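/- Let M be a real symmetric p×p matrix of rank r whose smallest nonzero singular value equals σ, and let Δ be a real symmetric p×p matrix with ‖Δ‖₂ ≤ σ/8 such that M+Δ also has rank r. Then ‖𝒫_{T(M)^⊥}(Δ)‖₂ ≤ ‖Δ‖₂² / σ. -/

import Mathlib

open Matrix MeasureTheory
open scoped Classical

noncomputable section

namespace LVGGM

variable {p h : ℕ}

/-- Spectral norm (largest singular value) of a real square matrix. -/
def specNorm (M : Matrix (Fin p) (Fin p) ℝ) : ℝ :=
  ‖Matrix.toEuclideanCLM (𝕜 := ℝ) M‖

/-- Entrywise max norm `‖M‖_∞`. -/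
def maxNorm (M : Matrix (Fin p) (Fin p) ℝ) : ℝ :=
  ⨆ i, ⨆ j, |M i j|

/-- Entrywise ℓ₁ norm `‖M‖₁`. -/
def l1Norm (M : Matrix (Fin p) (Fin p) ℝ) : ℝ :=
  ∑ i, ∑ j, |M i j|

/-- The matrix of the orthogonal projection of ℝ^p onto the column space of `M`. -/
def colProj (M : Matrix (Fin p) (Fin p) ℝ) : Matrix (Fin p) (Fin p) ℝ :=
  LinearMap.toMatrix (EuclideanSpace.basisFun (Fin p) ℝ).toBasis
    (EuclideanSpace.basisFun (Fin p) ℝ).toBasis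
    ((LinearMap.range (Matrix.toEuclideanLin M)).subtype ∘ₗ
      (Submodule.orthogonalProjectionOnto (LinearMap.range (Matrix.toEuclideanLin M))).toLinearMap)

/-- Singular values of a matrix, as square roots of eigenvalues of `Mᴴ M`. -/
def singVals (M : Matrix (Fin p) (Fin p) ℝ) (i : Fin p) : ℝ :=
  Real.sqrt ((Matrix.posSemidef_conjTranspose_mul_self M).1.eigenvalues i)

/-! ### Sparse tangent spaces -/

/-- Tangent space to the variety of sparse matrices at `M₀`. -/
def OmegaSet (M₀ : Matrix (Fin p) (Fin p) ℝ) : Set (Matrix (Fin p) (Fin p) ℝ) :=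
  {N | ∀ i j, M₀ i j = 0 → N i j = 0}

/-- Orthogonal projection onto `OmegaSet M₀`. -/
def projOmega (M₀ N : Matrix (Fin p) (Fin p) ℝ) : Matrix (Fin p) (Fin p) ℝ :=
  Matrix.of fun i j => if M₀ i j = 0 then 0 else N i j

/-- Orthogonal projection onto the orthogonal complement of `OmegaSet M₀`. -/
def projOmegaPerp (M₀ N : Matrix (Fin p) (Fin p) ℝ) : Matrix (Fin p) (Fin p) ℝ :=
  Matrix.of fun i j => if M₀ i j = 0 then N i j else 0

/-- `μ(Ω(M₀))`: max spectral norm over the `‖·‖_∞`-unit ball of `Ω(M₀)`. -/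
def muOmega (M₀ : Matrix (Fin p) (Fin p) ℝ) : ℝ :=
  ⨆ N : {N : Matrix (Fin p) (Fin p) ℝ // N ∈ OmegaSet M₀ ∧ maxNorm N ≤ 1}, specNorm N.1

/-! ### Low-rank tangent spaces (symmetric version) -/

/-- `𝒫_{T(M)}` for symmetric `M`: `N ↦ P N + N P − P N P` with `P` the column-space projector. -/
def projTsym (M N : Matrix (Fin p) (Fin p) ℝ) : Matrix (Fin p) (Fin p) ℝ :=
  colProj M * N + N * colProj M - colProj M * N * colProj M

/-- `𝒫_{T(M)^⊥}` for symmetric `M`: `N ↦ (I−P) N (I−P)`. -/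
def projTsymPerp (M N : Matrix (Fin p) (Fin p) ℝ) : Matrix (Fin p) (Fin p) ℝ :=
  (1 - colProj M) * N * (1 - colProj M)

/-- Tangent space to the variety of symmetric low-rank matrices at symmetric `M`. -/
def TsetSym (M : Matrix (Fin p) (Fin p) ℝ) : Set (Matrix (Fin p) (Fin p) ℝ) :=
  {N | N.IsHermitian ∧ projTsymPerp M N = 0}

/-- `ξ(T(M))` (symmetric version). -/
def xiT (M : Matrix (Fin p) (Fin p) ℝ) : ℝ :=
  ⨆ N : {N : Matrix (Fin p) (Fin p) ℝ // N ∈ TsetSym M ∧ specNorm N ≤ 1}, maxNorm N.1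

/-- `ρ(T(M₁), T(M₂))` (symmetric version). -/
def rhoSym (M₁ M₂ : Matrix (Fin p) (Fin p) ℝ) : ℝ :=
  ⨆ N : {N : Matrix (Fin p) (Fin p) ℝ // specNorm N ≤ 1},
    specNorm (projTsym M₁ N.1 - projTsym M₂ N.1)

/-! ### Low-rank tangent spaces (general version) -/

/-- `𝒫_{T(M)}` for general `M`: `N ↦ P_U N + N P_V − P_U N P_V`. -/
def projTgen (M N : Matrix (Fin p) (Fin p) ℝ) : Matrix (Fin p) (Fin p) ℝ :=
  colProj M * N + N * colProj Mᵀ - colProj M * N * colProj Mᵀ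

/-- `𝒫_{T(M)^⊥}` for general `M`. -/
def projTgenPerp (M N : Matrix (Fin p) (Fin p) ℝ) : Matrix (Fin p) (Fin p) ℝ :=
  (1 - colProj M) * N * (1 - colProj Mᵀ)

/-- Tangent space to the variety of low-rank matrices at a general matrix `M`. -/
def TsetGen (M : Matrix (Fin p) (Fin p) ℝ) : Set (Matrix (Fin p) (Fin p) ℝ) :=
  {N | projTgenPerp M N = 0}

/-- `ξ(T(M))` (general version). -/
def xiGen (M : Matrix (Fin p) (Fin p) ℝ) : ℝ :=
  ⨆ N : {N : Matrix (Fin p) (Fin p) ℝ // N ∈ TsetGen M ∧ specNorm N ≤ 1}, maxNorm N.1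

/-- Euclidean norm of the `i`-th column of `P`, i.e. `‖P e_i‖`. -/
def colEucNorm (P : Matrix (Fin p) (Fin p) ℝ) (i : Fin p) : ℝ :=
  Real.sqrt (∑ j, (P j i) ^ 2)

/-- Incoherence `inc(M)` of the row/column spaces of `M`. -/
def inc (M : Matrix (Fin p) (Fin p) ℝ) : ℝ :=
  max (⨆ i, colEucNorm (colProj M) i) (⨆ i, colEucNorm (colProj Mᵀ) i)

/-! ### Orthogonal projections onto arbitrary subspaces of matrices -/

/-- Matrices as vectors in the Euclidean space of entries (trace inner product). -/
def toELin : Matrix (Fin p) (Fin p) ℝ →ₗ[ℝ] EuclideanSpace ℝ (Fin p × Fin p) where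
  toFun M := WithLp.toLp 2 (fun q : Fin p × Fin p => M q.1 q.2)
  map_add' _ _ := rfl
  map_smul' _ _ := rfl

/-- Orthogonal projection (trace inner product) onto a subspace of matrices. -/
def matProj (T : Submodule ℝ (Matrix (Fin p) (Fin p) ℝ)) (N : Matrix (Fin p) (Fin p) ℝ) :
    Matrix (Fin p) (Fin p) ℝ :=
  Matrix.of fun i j => (Submodule.orthogonalProjectionOnto (T.map toELin) (toELin N) : EuclideanSpace ℝ (Fin p × Fin p)) (i, j)

/-- `ρ(T₁,T₂)` for arbitrary subspaces of matrices. -/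
def rhoSub (T₁ T₂ : Submodule ℝ (Matrix (Fin p) (Fin p) ℝ)) : ℝ :=
  ⨆ N : {N : Matrix (Fin p) (Fin p) ℝ // specNorm N ≤ 1},
    specNorm (matProj T₁ N.1 - matProj T₂ N.1)

/-- `ξ(T)` for an arbitrary subspace of matrices. -/
def xiSub (T : Submodule ℝ (Matrix (Fin p) (Fin p) ℝ)) : ℝ :=
  ⨆ N : {N : Matrix (Fin p) (Fin p) ℝ // N ∈ T ∧ specNorm N ≤ 1}, maxNorm N.1

/-! ### The dual norm g_γ -/

/-- `g_γ(S,L) = max(‖S‖_∞/γ, ‖L‖₂)`. -/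
def gNorm (γ : ℝ) (S L : Matrix (Fin p) (Fin p) ℝ) : ℝ :=
  max (maxNorm S / γ) (specNorm L)

/-- `g_γ(𝒜†(M)) = max(‖M‖_∞/γ, ‖M‖₂)`. -/
def gA (γ : ℝ) (M : Matrix (Fin p) (Fin p) ℝ) : ℝ :=
  max (maxNorm M / γ) (specNorm M)

/-! ### Latent-variable Fisher information setup -/

/-- `S* = K*_O`. -/
def Sstar (K : Matrix (Fin p ⊕ Fin h) (Fin p ⊕ Fin h) ℝ) : Matrix (Fin p) (Fin p) ℝ :=
  K.toBlocks₁₁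

/-- `L* = K*_{O,H} (K*_H)⁻¹ K*_{H,O}`. -/
def Lstar (K : Matrix (Fin p ⊕ Fin h) (Fin p ⊕ Fin h) ℝ) : Matrix (Fin p) (Fin p) ℝ :=
  K.toBlocks₁₂ * (K.toBlocks₂₂)⁻¹ * K.toBlocks₂₁

/-- `K̃*_O = S* − L*` (Schur complement). -/
def KtildeO (K : Matrix (Fin p ⊕ Fin h) (Fin p ⊕ Fin h) ℝ) : Matrix (Fin p) (Fin p) ℝ :=
  Sstar K - Lstar K

/-- `Σ*_O = (K̃*_O)⁻¹`. -/
def SigmaO (K : Matrix (Fin p ⊕ Fin h) (Fin p ⊕ Fin h) ℝ) : Matrix (Fin p) (Fin p) ℝ :=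
  (KtildeO K)⁻¹

/-- `ψ = ‖Σ*_O‖₂`. -/
def psi (K : Matrix (Fin p ⊕ Fin h) (Fin p ⊕ Fin h) ℝ) : ℝ :=
  specNorm (SigmaO K)

/-- Fisher information operator `ℐ*(M) = Σ*_O M Σ*_O`. -/
def Istar (K : Matrix (Fin p ⊕ Fin h) (Fin p ⊕ Fin h) ℝ) (M : Matrix (Fin p) (Fin p) ℝ) :
    Matrix (Fin p) (Fin p) ℝ :=
  SigmaO K * M * SigmaO K

/-- A nearby tangent space: `T' = T(M')` for a symmetric `M'` with the same rank as `Lst`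
and `ρ(T',T(Lst)) ≤ ξ(T(Lst))/2`. -/
def Nearby (Lst M' : Matrix (Fin p) (Fin p) ℝ) : Prop :=
  M'.IsHermitian ∧ M'.rank = Lst.rank ∧ rhoSym M' Lst ≤ xiT Lst / 2

/-- `α_Ω`. -/
def alphaOmega (K : Matrix (Fin p ⊕ Fin h) (Fin p ⊕ Fin h) ℝ) : ℝ :=
  ⨅ M : {M : Matrix (Fin p) (Fin p) ℝ // M ∈ OmegaSet (Sstar K) ∧ maxNorm M = 1},
    maxNorm (projOmega (Sstar K) (Istar K (projOmega (Sstar K) M.1)))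

/-- `δ_Ω`. -/
def deltaOmega (K : Matrix (Fin p ⊕ Fin h) (Fin p ⊕ Fin h) ℝ) : ℝ :=
  ⨆ M : {M : Matrix (Fin p) (Fin p) ℝ // M ∈ OmegaSet (Sstar K) ∧ maxNorm M = 1},
    maxNorm (projOmegaPerp (Sstar K) (Istar K (projOmega (Sstar K) M.1)))

/-- `β_Ω`. -/
def betaOmega (K : Matrix (Fin p ⊕ Fin h) (Fin p ⊕ Fin h) ℝ) : ℝ :=
  ⨆ M : {M : Matrix (Fin p) (Fin p) ℝ // M ∈ OmegaSet (Sstar K) ∧ specNorm M = 1},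
    specNorm (Istar K M.1)

/-- `α_T`. -/
def alphaTC (K : Matrix (Fin p ⊕ Fin h) (Fin p ⊕ Fin h) ℝ) : ℝ :=
  ⨅ x : {x : Matrix (Fin p) (Fin p) ℝ × Matrix (Fin p) (Fin p) ℝ //
      Nearby (Lstar K) x.1 ∧ x.2 ∈ TsetSym x.1 ∧ specNorm x.2 = 1},
    specNorm (projTsym x.1.1 (Istar K (projTsym x.1.1 x.1.2)))

/-- `δ_T`. -/
def deltaTC (K : Matrix (Fin p ⊕ Fin h) (Fin p ⊕ Fin h) ℝ) : ℝ :=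
  ⨆ x : {x : Matrix (Fin p) (Fin p) ℝ × Matrix (Fin p) (Fin p) ℝ //
      Nearby (Lstar K) x.1 ∧ x.2 ∈ TsetSym x.1 ∧ specNorm x.2 = 1},
    specNorm (projTsymPerp x.1.1 (Istar K (projTsym x.1.1 x.1.2)))

/-- `β_T`. -/
def betaTC (K : Matrix (Fin p ⊕ Fin h) (Fin p ⊕ Fin h) ℝ) : ℝ :=
  ⨆ x : {x : Matrix (Fin p) (Fin p) ℝ × Matrix (Fin p) (Fin p) ℝ //
      Nearby (Lstar K) x.1 ∧ x.2 ∈ TsetSym x.1 ∧ maxNorm x.2 = 1},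
    maxNorm (Istar K x.1.2)

/-- `α = min(α_Ω, α_T)`. -/
def alphaC (K : Matrix (Fin p ⊕ Fin h) (Fin p ⊕ Fin h) ℝ) : ℝ :=
  min (alphaOmega K) (alphaTC K)

/-- `δ = max(δ_Ω, δ_T)`. -/
def deltaC (K : Matrix (Fin p ⊕ Fin h) (Fin p ⊕ Fin h) ℝ) : ℝ :=
  max (deltaOmega K) (deltaTC K)

/-- `β = max(β_Ω, β_T)`. -/
def betaC (K : Matrix (Fin p ⊕ Fin h) (Fin p ⊕ Fin h) ℝ) : ℝ :=
  max (betaOmega K) (betaTC K)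

/-! ### Probability: iid Gaussian samples and sample covariance -/

/-- The square root of a positive-semidefinite matrix, as `Matrix.PosSemidef.sqrt` was defined
in the older Mathlib. -/
def psdSqrtOld {q : ℕ} {A : Matrix (Fin q) (Fin q) ℝ} (hA : A.PosSemidef) :
    Matrix (Fin q) (Fin q) ℝ :=
  hA.1.eigenvectorUnitary.1 * diagonal ((↑) ∘ (√·) ∘ hA.1.eigenvalues) *
    (star hA.1.eigenvectorUnitary : Matrix (Fin q) (Fin q) ℝ)

/-- The joint law of `n` i.i.d. samples from `N(0, S)` on `ℝ^p`, realized by pushing forward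
i.i.d. standard Gaussians through the positive-semidefinite square root of `S`. -/
def iidGaussian (n p : ℕ) (S : Matrix (Fin p) (Fin p) ℝ) : Measure (Fin n → Fin p → ℝ) :=
  if hS : S.PosSemidef then
    (Measure.pi fun _ : Fin n => Measure.pi fun _ : Fin p =>
        ProbabilityTheory.gaussianReal 0 1).map
      (fun Z => fun i => (psdSqrtOld hS).mulVec (Z i))
  else 0

/-- Sample covariance matrix of samples `X 1, …, X n`. -/
def sampleCov {p n : ℕ} (X : Fin n → Fin p → ℝ) : Matrix (Fin p) (Fin p) ℝ :=
  (n : ℝ)⁻¹ • ∑ i, Matrix.vecMulVec (X i) (X i)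

/-! ### Optimization programs -/

/-- Nuclear norm `‖M‖_*` (sum of singular values). -/
def nuclearNorm (M : Matrix (Fin p) (Fin p) ℝ) : ℝ :=
  (psdSqrtOld (Matrix.posSemidef_conjTranspose_mul_self M)).trace

/-- Objective of the program (sdp1): `tr((S−L)Σ) − log det(S−L) + λ(γ‖S‖₁ + tr(L))`. -/
def objSDP1 (Sig : Matrix (Fin p) (Fin p) ℝ) (lam gam : ℝ)
    (S L : Matrix (Fin p) (Fin p) ℝ) : ℝ :=
  ((S - L) * Sig).trace - Real.log (S - L).det + lam * (gam * l1Norm S + L.trace)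

/-- Feasibility for (sdp1): symmetric `S, L`, `S − L ≻ 0`, `L ⪰ 0`. -/
def FeasSDP1 (S L : Matrix (Fin p) (Fin p) ℝ) : Prop :=
  S.IsHermitian ∧ L.IsHermitian ∧ (S - L).PosDef ∧ L.PosSemidef

/-- `(S,L)` is an optimum of the program (sdp1). -/
def IsOptSDP1 (Sig : Matrix (Fin p) (Fin p) ℝ) (lam gam : ℝ)
    (S L : Matrix (Fin p) (Fin p) ℝ) : Prop :=
  FeasSDP1 S L ∧ ∀ S' L', FeasSDP1 S' L' →
    objSDP1 Sig lam gam S L ≤ objSDP1 Sig lam gam S' L'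

/-- Objective with the nuclear norm: `tr((S−L)Σ) − log det(S−L) + λ(γ‖S‖₁ + ‖L‖_*)`. -/
def objNuc (Sig : Matrix (Fin p) (Fin p) ℝ) (lam gam : ℝ)
    (S L : Matrix (Fin p) (Fin p) ℝ) : ℝ :=
  ((S - L) * Sig).trace - Real.log (S - L).det + lam * (gam * l1Norm S + nuclearNorm L)

/-- Feasibility for the tangent-space constrained program: symmetric, `S ∈ Ω(Sst)`,
`L ∈ T(M')`, `S − L ≻ 0`. -/
def FeasTS (Sst M' : Matrix (Fin p) (Fin p) ℝ) (S L : Matrix (Fin p) (Fin p) ℝ) : Prop :=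
  S.IsHermitian ∧ S ∈ OmegaSet Sst ∧ L ∈ TsetSym M' ∧ (S - L).PosDef

/-- Optimality for the tangent-space constrained program. -/
def IsOptTS (Sst M' Sig : Matrix (Fin p) (Fin p) ℝ) (lam gam : ℝ)
    (S L : Matrix (Fin p) (Fin p) ℝ) : Prop :=
  FeasTS Sst M' S L ∧ ∀ S' L', FeasTS Sst M' S' L' →
    objNuc Sig lam gam S L ≤ objNuc Sig lam gam S' L'

/-- Feasibility for the unconstrained nuclear-norm program: symmetric, `S − L ≻ 0`. -/
def FeasSy (S L : Matrix (Fin p) (Fin p) ℝ) : Prop :=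
  S.IsHermitian ∧ L.IsHermitian ∧ (S - L).PosDef

/-- Optimality for the unconstrained nuclear-norm program. -/
def IsOptSy (Sig : Matrix (Fin p) (Fin p) ℝ) (lam gam : ℝ)
    (S L : Matrix (Fin p) (Fin p) ℝ) : Prop :=
  FeasSy S L ∧ ∀ S' L', FeasSy S' L' →
    objNuc Sig lam gam S L ≤ objNuc Sig lam gam S' L'

/-! ### Spectral projectors and inertia -/

/-- Orthogonal projection onto the direct sum of the eigenspaces of a symmetric matrix `A`
corresponding to eigenvalues of magnitude less than `η`. -/
def spectralProjLT (A : Matrix (Fin p) (Fin p) ℝ) (η : ℝ) : Matrix (Fin p) (Fin p) ℝ :=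
  if hA : A.IsHermitian then
    ∑ i ∈ Finset.univ.filter (fun i => |hA.eigenvalues i| < η),
      Matrix.vecMulVec (fun j => hA.eigenvectorBasis i j) (fun j => hA.eigenvectorBasis i j)
  else 0

/-- `t` is an eigenvalue of `A`. -/
def hasEigval (A : Matrix (Fin p) (Fin p) ℝ) (t : ℝ) : Prop :=
  ∃ v : Fin p → ℝ, v ≠ 0 ∧ A.mulVec v = t • v

/-- Inertia (numbers of positive, negative, and zero eigenvalues) of a symmetric matrix. -/
def inertia (M : Matrix (Fin p) (Fin p) ℝ) : ℕ × ℕ × ℕ :=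
  if hM : M.IsHermitian then
    ((Finset.univ.filter fun i => 0 < hM.eigenvalues i).card,
     (Finset.univ.filter fun i => hM.eigenvalues i < 0).card,
     (Finset.univ.filter fun i => hM.eigenvalues i = 0).card)
  else (0, 0, 0)

end LVGGM

/-!
Let `Q` be the orthogonal projection onto `K = ker M`, so that `𝒫_{T(M)^⊥}(Δ) = QΔQ`. Since
`M` is bounded below by `σ` on `Kᗮ` and `‖Δ‖ < σ`, no nonzero vector of `ker (M + Δ)` lies in
`Kᗮ`; as both kernels have dimension `p - r`, `Q` maps `ker (M + Δ)` onto `K`. For `v ∈ K`, lift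
`a = QΔv` to `x ∈ ker (M + Δ)` and put `w = x - a ∈ Kᗮ`. Then `Mw = -Δx` gives
`σ‖w‖ ≤ ‖Δ‖‖x‖`, and self-adjointness gives `‖a‖² = -⟪w, Δv - a⟫`; together with
`‖a‖² + ‖Δv - a‖² ≤ ‖Δ‖²‖v‖²` this forces `σ‖a‖ ≤ ‖Δ‖²‖v‖`.
-/

open scoped RealInnerProductSpace
open Module Submodule

theorem mul_norm_sq_le_inner_of_mem_orthogonal_ker {E ι : Type*} [NormedAddCommGroup E]
    [InnerProductSpace ℝ E] [Fintype ι] {A : E →L[ℝ] E} (b : OrthonormalBasis ι ℝ E)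
    {μ : ι → ℝ} (hb : ∀ i, A (b i) = μ i • b i) {c : ℝ} (hμ : ∀ i, μ i = 0 ∨ c ≤ μ i)
    {x : E} (hx : x ∈ A.kerᗮ) :
    c * ‖x‖ ^ 2 ≤ ⟪A x, x⟫ := by
  have hAx : A x = ∑ i, (μ i * ⟪b i, x⟫) • b i := by
    conv_lhs => rw [← b.sum_repr' x]
    simp only [map_sum, map_smul, hb, smul_smul, mul_comm]
  have hx2 : ‖x‖ ^ 2 = ∑ i, ⟪b i, x⟫ ^ 2 := by
    simp only [← b.sum_sq_norm_inner_right x, Real.norm_eq_abs, sq_abs]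
  rw [hAx, sum_inner, hx2, Finset.mul_sum]
  refine Finset.sum_le_sum fun i _ => ?_
  rw [real_inner_smul_left, mul_assoc, ← sq]
  rcases hμ i with h0 | hc
  · have : ⟪b i, x⟫ = 0 := hx _ (by simp [hb, h0])
    simp [this, h0]
  · exact mul_le_mul_of_nonneg_right hc (sq_nonneg _)

-- `s, t, y, β, n` play the roles of `‖a‖, ‖w‖, ‖x‖, ‖Δv - a‖, ‖v‖` in the sketch above.
theorem mul_le_sq_mul_of_perturbation_bounds {s t β y ε n σ : ℝ} (hs : 0 ≤ s) (ht : 0 ≤ t)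
    (hn : 0 ≤ n) (hε : 0 ≤ ε) (hεσ : ε < σ) (hst : s ^ 2 ≤ t * β) (hty : σ * t ≤ ε * y)
    (hy : y ^ 2 = s ^ 2 + t ^ 2) (hβ : s ^ 2 + β ^ 2 ≤ (ε * n) ^ 2) :
    σ * s ≤ ε ^ 2 * n := by
  have hσ : 0 < σ := hε.trans_lt hεσ
  have ht2 : (σ ^ 2 - ε ^ 2) * t ^ 2 ≤ ε ^ 2 * s ^ 2 := by
    nlinarith [mul_le_mul hty hty (by positivity) (by nlinarith)]
  have hs2 : s ^ 2 * (σ ^ 2 - ε ^ 2) ≤ ε ^ 2 * ((ε * n) ^ 2 - s ^ 2) := by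
    rcases hs.eq_or_lt with rfl | hs0
    · nlinarith
    have hσε : 0 ≤ σ ^ 2 - ε ^ 2 := by nlinarith
    refine le_of_mul_le_mul_left ?_ (by positivity : 0 < s ^ 2)
    calc s ^ 2 * (s ^ 2 * (σ ^ 2 - ε ^ 2)) = (s ^ 2) ^ 2 * (σ ^ 2 - ε ^ 2) := by ring
      _ ≤ (t * β) ^ 2 * (σ ^ 2 - ε ^ 2) := by gcongr
      _ = β ^ 2 * ((σ ^ 2 - ε ^ 2) * t ^ 2) := by ring
      _ ≤ β ^ 2 * (ε ^ 2 * s ^ 2) := by gcongr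
      _ ≤ ((ε * n) ^ 2 - s ^ 2) * (ε ^ 2 * s ^ 2) := by gcongr; linarith
      _ = s ^ 2 * (ε ^ 2 * ((ε * n) ^ 2 - s ^ 2)) := by ring
  have : (σ * s) ^ 2 ≤ (ε ^ 2 * n) ^ 2 := by nlinarith
  exact (pow_le_pow_iff_left₀ (by positivity) (by positivity) two_ne_zero).mp this

section
variable {E : Type*} [NormedAddCommGroup E] [InnerProductSpace ℝ E] [FiniteDimensional ℝ E]
  {T D : E →L[ℝ] E} {σ : ℝ}

theorem exists_mem_ker_add_starProjection_eq (hTlow : ∀ x ∈ T.kerᗮ, σ * ‖x‖ ≤ ‖T x‖)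
    (hDσ : ‖D‖ < σ) (hrank : finrank ℝ (T + D).ker = finrank ℝ T.ker) {u : E} (hu : u ∈ T.ker) :
    ∃ x ∈ (T + D).ker, T.ker.starProjection x = u := by
  let φ : (T + D).ker →ₗ[ℝ] T.ker :=
    T.ker.orthogonalProjectionOnto.toLinearMap ∘ₗ (T + D).ker.subtype
  have hφ : Function.Injective φ := by
    rw [← LinearMap.ker_eq_bot, LinearMap.ker_eq_bot']
    rintro ⟨x, hx⟩ hφx
    have hxo : x ∈ T.kerᗮ := orthogonalProjectionOnto_eq_zero_iff.mp hφx
    have hTx : T x = -D x := eq_neg_of_add_eq_zero_left hx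
    have : σ * ‖x‖ ≤ ‖D‖ * ‖x‖ :=
      (hTlow x hxo).trans (by rw [hTx, norm_neg]; exact D.le_opNorm x)
    have : ‖x‖ = 0 := by nlinarith [norm_nonneg x]
    simpa using this
  obtain ⟨⟨x, hx⟩, hφx⟩ :=
    (LinearMap.injective_iff_surjective_of_finrank_eq_finrank hrank).mp hφ ⟨u, hu⟩
  exact ⟨x, hx, congrArg Subtype.val hφx⟩

theorem norm_starProjection_ker_apply_le (hT : IsSelfAdjoint T) (hD : IsSelfAdjoint D)
    (hTlow : ∀ x ∈ T.kerᗮ, σ * ‖x‖ ≤ ‖T x‖) (hDσ : ‖D‖ < σ)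
    (hrank : finrank ℝ (T + D).ker = finrank ℝ T.ker) {v : E} (hv : v ∈ T.ker) :
    ‖T.ker.starProjection (D v)‖ ≤ ‖D‖ ^ 2 / σ * ‖v‖ := by
  set K := T.ker
  set a := K.starProjection (D v)
  have ha : a ∈ K := K.starProjection_apply_mem (D v)
  have hb : D v - a ∈ Kᗮ := K.sub_starProjection_mem_orthogonal (D v)
  have hTs : ∀ x y, ⟪T x, y⟫ = ⟪x, T y⟫ := hT.isSymmetric
  have hDs : ∀ x y, ⟪D x, y⟫ = ⟪x, D y⟫ := hD.isSymmetric
  have hTa : T a = 0 := ha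
  have hTv : T v = 0 := hv
  obtain ⟨x, hx, hxa⟩ := exists_mem_ker_add_starProjection_eq hTlow hDσ hrank ha
  have hw : x - a ∈ Kᗮ := hxa ▸ K.sub_starProjection_mem_orthogonal x
  have hTx : T x = -D x := eq_neg_of_add_eq_zero_left hx
  have hTw : T (x - a) = -D x := by rw [map_sub, hTx, hTa, sub_zero]
  have hDxv : ⟪D x, v⟫ = 0 := by
    rw [← neg_neg (D x), ← hTx, inner_neg_left, hTs, hTv, inner_zero_right, neg_zero]
  have ha2 : ‖a‖ ^ 2 = -⟪x - a, D v - a⟫ := by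
    have h1 : ⟪a, D v - a⟫ = 0 := hb a ha
    have h2 : ⟪x - a, a⟫ = 0 := by rw [real_inner_comm]; exact hw a ha
    rw [inner_sub_right] at h1
    calc ‖a‖ ^ 2 = ⟪a, D v⟫ := by rw [← real_inner_self_eq_norm_sq]; linarith
      _ = ⟪D x, v⟫ - ⟪D (x - a), v⟫ := by
            rw [← inner_sub_left, ← map_sub, sub_sub_cancel, hDs]
      _ = -⟪x - a, D v - a⟫ := by
            rw [hDxv, zero_sub, inner_sub_right, h2, sub_zero, ← hDs]
  have hst : ‖a‖ ^ 2 ≤ ‖x - a‖ * ‖D v - a‖ :=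
    ha2 ▸ (neg_le_abs _).trans (abs_real_inner_le_norm _ _)
  have hty : σ * ‖x - a‖ ≤ ‖D‖ * ‖x‖ :=
    (hTlow _ hw).trans (by rw [hTw, norm_neg]; exact D.le_opNorm x)
  have hy : ‖x‖ ^ 2 = ‖a‖ ^ 2 + ‖x - a‖ ^ 2 := by
    simpa only [sq, add_sub_cancel] using norm_add_sq_eq_norm_sq_add_norm_sq_real (hw a ha)
  have hβ : ‖a‖ ^ 2 + ‖D v - a‖ ^ 2 ≤ (‖D‖ * ‖v‖) ^ 2 :=
    calc ‖a‖ ^ 2 + ‖D v - a‖ ^ 2 = ‖D v‖ ^ 2 := by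
          simpa only [sq, add_sub_cancel] using
            (norm_add_sq_eq_norm_sq_add_norm_sq_real (hb a ha)).symm
      _ ≤ (‖D‖ * ‖v‖) ^ 2 := by gcongr; exact D.le_opNorm v
  rw [div_mul_eq_mul_div, le_div_iff₀ ((norm_nonneg D).trans_lt hDσ), mul_comm]
  exact mul_le_sq_mul_of_perturbation_bounds (norm_nonneg _) (norm_nonneg _) (norm_nonneg _)
    (norm_nonneg _) hDσ hst hty hy hβ

theorem norm_starProjection_ker_mul_mul_le (hT : IsSelfAdjoint T) (hD : IsSelfAdjoint D)
    (hTlow : ∀ x ∈ T.kerᗮ, σ * ‖x‖ ≤ ‖T x‖) (hDσ : ‖D‖ < σ)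
    (hrank : finrank ℝ (T + D).ker = finrank ℝ T.ker) :
    ‖T.ker.starProjection * D * T.ker.starProjection‖ ≤ ‖D‖ ^ 2 / σ := by
  have hσ : 0 < σ := (norm_nonneg D).trans_lt hDσ
  refine ContinuousLinearMap.opNorm_le_bound _ (by positivity) fun x => ?_
  calc ‖T.ker.starProjection (D (T.ker.starProjection x))‖
      ≤ ‖D‖ ^ 2 / σ * ‖T.ker.starProjection x‖ :=
        norm_starProjection_ker_apply_le hT hD hTlow hDσ hrank (T.ker.starProjection_apply_mem x)
    _ ≤ ‖D‖ ^ 2 / σ * ‖x‖ := by gcongr; exact T.ker.norm_starProjection_apply_le x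

end

theorem Matrix.rank_add_finrank_ker_toEuclideanCLM {n : Type*} [Fintype n] [DecidableEq n]
    (A : Matrix n n ℝ) : A.rank + finrank ℝ (toEuclideanCLM (𝕜 := ℝ) A).ker = Fintype.card n := by
  rw [coe_toEuclideanCLM_eq_toEuclideanLin, toEuclideanLin_eq_toLin_orthonormal,
    rank_eq_finrank_range_toLin A (EuclideanSpace.basisFun n ℝ).toBasis
      (EuclideanSpace.basisFun n ℝ).toBasis, LinearMap.finrank_range_add_finrank_ker,
    finrank_euclideanSpace]

namespace LVGGM

theorem mul_norm_le_norm_toEuclideanCLM_apply {p : ℕ} {M : Matrix (Fin p) (Fin p) ℝ}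
    {σ : ℝ} (hσ : 0 ≤ σ) (hσmin : ∀ i, singVals M i = 0 ∨ σ ≤ singVals M i)
    {x : EuclideanSpace ℝ (Fin p)} (hx : x ∈ (toEuclideanCLM (𝕜 := ℝ) M).kerᗮ) :
    σ * ‖x‖ ≤ ‖toEuclideanCLM (𝕜 := ℝ) M x‖ := by
  set T := toEuclideanCLM (𝕜 := ℝ) M
  have hH := posSemidef_conjTranspose_mul_self M
  have hA : toEuclideanCLM (𝕜 := ℝ) (Mᴴ * M) = ContinuousLinearMap.adjoint T ∘L T := by
    rw [← star_eq_conjTranspose, map_mul, map_star, ContinuousLinearMap.star_eq_adjoint]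
    rfl
  have hb : ∀ i, toEuclideanCLM (𝕜 := ℝ) (Mᴴ * M) (hH.1.eigenvectorBasis i) =
      hH.1.eigenvalues i • hH.1.eigenvectorBasis i := fun i => by
    rw [← WithLp.toLp_ofLp 2 (hH.1.eigenvectorBasis i), toEuclideanCLM_toLp,
      hH.1.mulVec_eigenvectorBasis, WithLp.toLp_smul]
  have hμ : ∀ i, hH.1.eigenvalues i = 0 ∨ σ ^ 2 ≤ hH.1.eigenvalues i := fun i => by
    rcases hσmin i with h0 | hσi
    · exact .inl (le_antisymm (Real.sqrt_eq_zero'.mp h0) (hH.eigenvalues_nonneg i))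
    · exact .inr ((Real.le_sqrt hσ (hH.eigenvalues_nonneg i)).mp hσi)
  have hx' : x ∈ (toEuclideanCLM (𝕜 := ℝ) (Mᴴ * M)).kerᗮ := by
    rwa [hA, ContinuousLinearMap.ker_adjoint_comp_self]
  have h := mul_norm_sq_le_inner_of_mem_orthogonal_ker hH.1.eigenvectorBasis hb hμ hx'
  rw [hA, ← RCLike.re_to_real (x := ⟪_, _⟫),
    ← ContinuousLinearMap.apply_norm_sq_eq_inner_adjoint_left, ← mul_pow] at h
  exact (pow_le_pow_iff_left₀ (by positivity) (norm_nonneg _) two_ne_zero).mp h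

theorem toEuclideanCLM_colProj {p : ℕ} (M : Matrix (Fin p) (Fin p) ℝ) :
    toEuclideanCLM (𝕜 := ℝ) (colProj M) = (toEuclideanCLM (𝕜 := ℝ) M).range.starProjection := by
  refine ContinuousLinearMap.coe_injective ?_
  rw [coe_toEuclideanCLM_eq_toEuclideanLin, toEuclideanLin_eq_toLin_orthonormal, colProj,
    toLin_toMatrix]
  rfl

theorem toEuclideanCLM_one_sub_colProj {p : ℕ} {M : Matrix (Fin p) (Fin p) ℝ}
    (hM : M.IsHermitian) :
    toEuclideanCLM (𝕜 := ℝ) (1 - colProj M) = (toEuclideanCLM (𝕜 := ℝ) M).ker.starProjection := by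
  rw [map_sub, map_one, toEuclideanCLM_colProj, ← starProjection_orthogonal']
  simp only [(hM.isSelfAdjoint.map _).isSymmetric.orthogonal_range]

end LVGGM

theorem statement_1_general {p : ℕ} (r : ℕ) (σ : ℝ) (M Δ : Matrix (Fin p) (Fin p) ℝ)
    (hM : M.IsHermitian) (hΔ : Δ.IsHermitian)
    (hrM : M.rank = r) (hrMΔ : (M + Δ).rank = r)
    (hσpos : 0 < σ)
    (hσmin : ∀ i, LVGGM.singVals M i = 0 ∨ σ ≤ LVGGM.singVals M i)
    (hΔsmall : LVGGM.specNorm Δ ≤ σ / 8) :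
    LVGGM.specNorm (LVGGM.projTsymPerp M Δ) ≤ (LVGGM.specNorm Δ) ^ 2 / σ := by
  have hrank : finrank ℝ (toEuclideanCLM (𝕜 := ℝ) (M + Δ)).ker =
      finrank ℝ (toEuclideanCLM (𝕜 := ℝ) M).ker := by
    have := M.rank_add_finrank_ker_toEuclideanCLM
    have := (M + Δ).rank_add_finrank_ker_toEuclideanCLM
    omega
  rw [map_add] at hrank
  have hDσ : ‖toEuclideanCLM (𝕜 := ℝ) Δ‖ < σ := hΔsmall.trans_lt (by linarith)
  have key := norm_starProjection_ker_mul_mul_le (hM.isSelfAdjoint.map _) (hΔ.isSelfAdjoint.map _)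
    (fun x hx => LVGGM.mul_norm_le_norm_toEuclideanCLM_apply hσpos.le hσmin hx) hDσ hrank
  rwa [LVGGM.specNorm, LVGGM.projTsymPerp, map_mul, map_mul,
    LVGGM.toEuclideanCLM_one_sub_colProj hM]

/-- Proposition: normal component of a rank-preserving perturbation.
If `M` is symmetric of rank `r` with smallest nonzero singular value `σ`, `Δ` is symmetric with
`‖Δ‖₂ ≤ σ/8`, and `M+Δ` also has rank `r`, then `‖𝒫_{T(M)^⊥}(Δ)‖₂ ≤ ‖Δ‖₂²/σ`. -/
theorem statement_1 {p : ℕ} (r : ℕ) (σ : ℝ) (M Δ : Matrix (Fin p) (Fin p) ℝ)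
    (hM : M.IsHermitian) (hΔ : Δ.IsHermitian)
    (hrM : M.rank = r) (hrMΔ : (M + Δ).rank = r)
    (hσpos : 0 < σ)
    (hσmin : ∀ i, LVGGM.singVals M i = 0 ∨ σ ≤ LVGGM.singVals M i)
    (hσex : ∃ i, LVGGM.singVals M i = σ)
    (hΔsmall : LVGGM.specNorm Δ ≤ σ / 8) :
    LVGGM.specNorm (LVGGM.projTsymPerp M Δ) ≤ (LVGGM.specNorm Δ) ^ 2 / σ :=
  statement_1_general r σ M Δ hM hΔ hrM hrMΔ hσpos hσmin hΔsmall
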